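/- arXiv:2311.17003 — 3 statements merged into one kernel-verified Lean document; each statement's English description precedes it below -/
import Mathlib

section
/- Let d^1,…,d^ℓ be nonzero dimension vectors, θ a linear form with θ·(Σ_m d^m) = 0, and k_m = C·μ(d^m) with C > 0 and μ(d^1) > μ(d^2) > … > μ(d^ℓ). Suppose that for each r = 1,…,ℓ−1, we have N_r := −⟨Σ_{m≤r} d^m, Σ_{n>r} d^n⟩ ≥ 2. Then for all 1 ≤ m, n ≤ ℓ: k_m − k_n < Σ_{1 ≤ p < q ≤ ℓ} (k_q − k_p)⟨d^p, d^q⟩. -/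
open Finset

private lemma tele_sum (k : ℕ → ℤ) (a b : ℕ) (hab : a ≤ b) :
    ∑ r ∈ Finset.Ico a b, (k (r+1) - k r) = k b - k a := by
  rw [Finset.sum_Ico_eq_sub _ hab, Finset.sum_range_sub, Finset.sum_range_sub]
  ring

private lemma swap_sum (ℓ : ℕ) (k : ℕ → ℤ) (Bv : ℕ → ℕ → ℤ) :
    ∑ p ∈ range ℓ, ∑ q ∈ range ℓ, (if p < q then (k q - k p) * Bv p q else 0)
    = ∑ r ∈ range ℓ, (k (r+1) - k r) *
        (∑ p ∈ range (r+1), ∑ q ∈ Ico (r+1) ℓ, Bv p q) := by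
  have key : ∀ p, ∀ q < ℓ, (if p < q then (k q - k p) * Bv p q else 0)
      = ∑ r ∈ range ℓ, (if p ≤ r ∧ r < q then (k (r+1) - k r) * Bv p q else 0) := by
    intro p q hq
    have hsub : Finset.Ico p q ⊆ range ℓ := fun r hr =>
      mem_range.mpr (lt_of_lt_of_le (mem_Ico.mp hr).2 (le_of_lt hq))
    have h1 : ∑ r ∈ range ℓ, (if p ≤ r ∧ r < q then (k (r+1) - k r) * Bv p q else 0)
        = ∑ r ∈ Finset.Ico p q, (k (r+1) - k r) * Bv p q := by
      rw [← Finset.sum_subset hsub (fun r _ hnr => if_neg (by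
        simp only [Finset.mem_Ico] at hnr; exact hnr))]
      exact Finset.sum_congr rfl fun r hr => if_pos (mem_Ico.mp hr)
    rw [h1, ← Finset.sum_mul]
    by_cases hpq : p < q
    · rw [tele_sum k p q (le_of_lt hpq), if_pos hpq]
    · rw [Finset.Ico_eq_empty (by omega), if_neg hpq]; simp
  calc ∑ p ∈ range ℓ, ∑ q ∈ range ℓ, (if p < q then (k q - k p) * Bv p q else 0)
      = ∑ p ∈ range ℓ, ∑ q ∈ range ℓ, ∑ r ∈ range ℓ,
          (if p ≤ r ∧ r < q then (k (r+1) - k r) * Bv p q else 0) := by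
        refine Finset.sum_congr rfl fun p _ => Finset.sum_congr rfl fun q hq => ?_
        exact key p q (mem_range.mp hq)
    _ = ∑ p ∈ range ℓ, ∑ r ∈ range ℓ, ∑ q ∈ range ℓ,
          (if p ≤ r ∧ r < q then (k (r+1) - k r) * Bv p q else 0) :=
        Finset.sum_congr rfl fun p _ => Finset.sum_comm
    _ = ∑ r ∈ range ℓ, ∑ p ∈ range ℓ, ∑ q ∈ range ℓ,
          (if p ≤ r ∧ r < q then (k (r+1) - k r) * Bv p q else 0) :=
        Finset.sum_comm
    _ = ∑ r ∈ range ℓ, (k (r+1) - k r) *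
          (∑ p ∈ range (r+1), ∑ q ∈ Ico (r+1) ℓ, Bv p q) := by
        refine Finset.sum_congr rfl fun r hr => ?_
        have hr' := mem_range.mp hr
        have hq : ∀ p, ∑ q ∈ range ℓ, (if p ≤ r ∧ r < q then (k (r+1) - k r) * Bv p q else 0)
            = if p ≤ r then ∑ q ∈ Ico (r+1) ℓ, (k (r+1) - k r) * Bv p q else 0 := by
          intro p
          by_cases hp : p ≤ r
          · rw [if_pos hp]
            have hsubq : Ico (r+1) ℓ ⊆ range ℓ := fun q hq =>
              mem_range.mpr (mem_Ico.mp hq).2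
            have hv : ∀ q ∈ range ℓ, q ∉ Ico (r+1) ℓ →
                (if p ≤ r ∧ r < q then (k (r+1) - k r) * Bv p q else 0) = 0 := by
              intro q hq1 hq2
              simp only [mem_range] at hq1
              simp only [Finset.mem_Ico] at hq2
              exact if_neg (by omega)
            rw [← Finset.sum_subset hsubq hv]
            refine Finset.sum_congr rfl fun q hq => ?_
            have := mem_Ico.mp hq
            exact if_pos ⟨hp, by omega⟩
          · rw [if_neg hp]
            exact Finset.sum_eq_zero fun q _ => if_neg (by omega)
        rw [Finset.sum_congr rfl fun p _ => hq p]
        have hsubp : range (r+1) ⊆ range ℓ := Finset.range_subset_range.mpr (by omega)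
        rw [← Finset.sum_subset hsubp (fun p hp1 hp2 => if_neg (by
          simp only [mem_range] at hp2; omega))]
        rw [Finset.mul_sum]
        refine Finset.sum_congr rfl fun p hp => ?_
        rw [if_pos (by have := mem_range.mp hp; omega), Finset.mul_sum]

/-- The key Teleman inequality under strong ample stability (`N r ≥ 2` for all `r`):
for all `m, n`, `k m − k n < η = ∑_{p<q} (k q − k p)⟨d^p, d^q⟩`. -/
theorem teleman_inequality_strong {ι : Type*} [Fintype ι]
    (B : (ι → ℤ) →ₗ[ℤ] (ι → ℤ) →ₗ[ℤ] ℤ)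
    (θ : ι → ℤ) (ℓ : ℕ) (hℓ : 2 ≤ ℓ)
    (d : ℕ → ι → ℕ) (hne : ∀ m < ℓ, d m ≠ 0)
    (C : ℕ) (hC : 0 < C) (k : ℕ → ℤ)
    (hk : ∀ m < ℓ, k m * (∑ i, (d m i : ℤ)) = (C : ℤ) * ∑ i, θ i * (d m i : ℤ))
    (hslope : ∀ m, m + 1 < ℓ →
      (∑ i, θ i * (d (m + 1) i : ℤ)) * (∑ i, (d m i : ℤ))
        < (∑ i, θ i * (d m i : ℤ)) * (∑ i, (d (m + 1) i : ℤ)))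
    (hsum : ∑ i, θ i * (∑ m ∈ Finset.range ℓ, (d m i : ℤ)) = 0)
    (hN : ∀ r, r + 1 < ℓ →
      2 ≤ -(B (∑ m ∈ Finset.range (r + 1), fun i => (d m i : ℤ))
              (∑ n ∈ Finset.Ico (r + 1) ℓ, fun i => (d n i : ℤ)))) :
    ∀ m < ℓ, ∀ n < ℓ,
      k m - k n < ∑ p ∈ Finset.range ℓ, ∑ q ∈ Finset.range ℓ,
        if p < q then (k q - k p) * B (fun i => (d p i : ℤ)) (fun i => (d q i : ℤ)) else 0 := by
  intro m hm n hn
  have hs : ∀ m < ℓ, 0 < ∑ i, (d m i : ℤ) := by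
    intro m hm
    obtain ⟨i, hi⟩ := Function.ne_iff.mp (hne m hm)
    refine Finset.sum_pos' (fun j _ => by positivity) ⟨i, Finset.mem_univ i, ?_⟩
    exact_mod_cast Nat.pos_of_ne_zero hi
  have hdec : ∀ r, r + 1 < ℓ → k (r+1) < k r := by
    intro r hr
    have h1 := hk r (by omega)
    have h2 := hk (r+1) hr
    have h3 := hslope r hr
    have hs1 := hs r (by omega)
    have hs2 := hs (r+1) hr
    have hCpos : (0:ℤ) < (C:ℤ) := by exact_mod_cast hC
    nlinarith [mul_pos hs1 hs2, mul_lt_mul_of_pos_left h3 hCpos]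
  have anti : ∀ b, b < ℓ → ∀ a, a ≤ b → k b ≤ k a := by
    intro b
    induction b with
    | zero =>
      intro _ a ha
      obtain rfl : a = 0 := Nat.le_zero.mp ha
      exact le_rfl
    | succ b ih =>
      intro hb a ha
      rcases Nat.eq_or_lt_of_le ha with rfl | h
      · exact le_rfl
      · exact le_trans (le_of_lt (hdec b hb)) (ih (by omega) a (by omega))
  have hS : ∀ r, (B (∑ m ∈ Finset.range (r + 1), fun i => (d m i : ℤ))
              (∑ n ∈ Finset.Ico (r + 1) ℓ, fun i => (d n i : ℤ)))
      = ∑ p ∈ range (r+1), ∑ q ∈ Ico (r+1) ℓ,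
          B (fun i => (d p i : ℤ)) (fun i => (d q i : ℤ)) := by
    intro r
    simp only [map_sum, LinearMap.coe_sum, Finset.sum_apply]
    rw [Finset.sum_comm]
  set Bv : ℕ → ℕ → ℤ := fun p q => B (fun i => (d p i : ℤ)) (fun i => (d q i : ℤ)) with hBv
  rw [swap_sum ℓ k Bv]
  obtain ⟨L, rfl⟩ : ∃ L, ℓ = L + 2 := ⟨ℓ - 2, by omega⟩
  have hterm : ∀ r ∈ range (L+1),
      2 * (k r - k (r+1)) ≤ (k (r+1) - k r) *
        (∑ p ∈ range (r+1), ∑ q ∈ Ico (r+1) (L+2), Bv p q) := by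
    intro r hr
    have hr' := mem_range.mp hr
    have hBle : (∑ p ∈ range (r+1), ∑ q ∈ Ico (r+1) (L+2), Bv p q) ≤ -2 := by
      have h2 := hN r (by omega)
      rw [hS r] at h2
      simp only [hBv]
      omega
    have hc : k (r+1) - k r < 0 := by have := hdec r (by omega); omega
    nlinarith
  have hsumbound : ∑ r ∈ range (L+1), 2 * (k r - k (r+1))
      ≤ ∑ r ∈ range (L+1), (k (r+1) - k r) *
          (∑ p ∈ range (r+1), ∑ q ∈ Ico (r+1) (L+2), Bv p q) :=
    Finset.sum_le_sum hterm
  have htel : ∑ r ∈ range (L+1), 2 * (k r - k (r+1)) = 2 * (k 0 - k (L+1)) := by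
    rw [← Finset.mul_sum, Finset.sum_range_sub']
  have hlast : ∑ r ∈ range (L+2), (k (r+1) - k r) *
        (∑ p ∈ range (r+1), ∑ q ∈ Ico (r+1) (L+2), Bv p q)
      = ∑ r ∈ range (L+1), (k (r+1) - k r) *
          (∑ p ∈ range (r+1), ∑ q ∈ Ico (r+1) (L+2), Bv p q) := by
    rw [Finset.sum_range_succ]
    simp
  have hkm : k m ≤ k 0 := anti m hm 0 (Nat.zero_le m)
  have hkn : k (L+1) ≤ k n := anti (L+1) (by omega) n (by omega)
  have hstrict : k (L+1) < k 0 :=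
    lt_of_le_of_lt (anti (L+1) (by omega) 1 (by omega)) (hdec 0 (by omega))
  rw [hlast]
  linarith
end

section
/- Under the hypotheses of the previous setup but assuming only N_r ≥ 1 for all r = 1,…,ℓ−1 and N_{r_0} ≥ 2 for at least one r_0, the inequality k_m − k_n < Σ_{1 ≤ p < q ≤ ℓ}(k_q − k_p)⟨d^p,d^q⟩ still holds for all 1 ≤ m,n ≤ ℓ. -/
section Aux

variable {ι : Type*} [Fintype ι]

omit [Fintype ι] in
private lemma teleman_key (B : (ι → ℤ) →ₗ[ℤ] (ι → ℤ) →ₗ[ℤ] ℤ)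
    (ℓ : ℕ) (d : ℕ → ι → ℤ) (k : ℕ → ℤ) :
    (∑ p ∈ Finset.range ℓ, ∑ q ∈ Finset.range ℓ,
        if p < q then (k q - k p) * B (d p) (d q) else 0)
      = ∑ r ∈ Finset.range ℓ, (k r - k (r+1)) *
          (-(B (∑ m ∈ Finset.range (r + 1), d m) (∑ n ∈ Finset.Ico (r + 1) ℓ, d n))) := by
  have hT : ∀ r ∈ Finset.range ℓ,
      (k r - k (r+1)) * (-(B (∑ m ∈ Finset.range (r + 1), d m)
          (∑ n ∈ Finset.Ico (r + 1) ℓ, d n)))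
      = ∑ p ∈ Finset.range ℓ, ∑ q ∈ Finset.range ℓ,
          if p ≤ r ∧ r < q then (k (r+1) - k r) * B (d p) (d q) else 0 := by
    intro r hr
    rw [Finset.mem_range] at hr
    have h1 : (Finset.range ℓ).filter (· ≤ r) = Finset.range (r+1) := by
      ext x
      simp only [Finset.mem_filter, Finset.mem_range, Nat.lt_succ_iff]
      omega
    have h2 : (Finset.range ℓ).filter (r < ·) = Finset.Ico (r+1) ℓ := by
      ext x
      simp only [Finset.mem_filter, Finset.mem_range, Finset.mem_Ico]
      omega
    calc (k r - k (r+1)) * (-(B (∑ m ∈ Finset.range (r + 1), d m)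
          (∑ n ∈ Finset.Ico (r + 1) ℓ, d n)))
        = (k (r+1) - k r) * (B (∑ m ∈ Finset.range (r + 1), d m)
          (∑ n ∈ Finset.Ico (r + 1) ℓ, d n)) := by ring
      _ = ∑ p ∈ Finset.range (r+1), ∑ q ∈ Finset.Ico (r+1) ℓ,
            (k (r+1) - k r) * B (d p) (d q) := by
          simp only [map_sum, LinearMap.coe_sum, Finset.sum_apply, Finset.mul_sum]
          rw [Finset.sum_comm]
      _ = ∑ p ∈ Finset.range ℓ, ∑ q ∈ Finset.range ℓ,
            if p ≤ r ∧ r < q then (k (r+1) - k r) * B (d p) (d q) else 0 := by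
          rw [← h1, ← h2, Finset.sum_filter]
          refine Finset.sum_congr rfl fun p _ => ?_
          by_cases hp : p ≤ r
          · simp only [hp, true_and, if_true, Finset.sum_filter]
          · simp [hp]
  rw [Finset.sum_congr rfl hT]
  conv_rhs => rw [Finset.sum_comm]
  refine Finset.sum_congr rfl fun p _ => ?_
  conv_rhs => rw [Finset.sum_comm]
  refine Finset.sum_congr rfl fun q hq => ?_
  rw [Finset.mem_range] at hq
  by_cases hpq : p < q
  · have hfil : (Finset.range ℓ).filter (fun r => p ≤ r ∧ r < q) = Finset.Ico p q := by
      ext x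
      simp only [Finset.mem_filter, Finset.mem_range, Finset.mem_Ico]
      omega
    have htel : ∑ r ∈ Finset.Ico p q, (k (r+1) - k r) = k q - k p := by
      rw [Finset.sum_Ico_eq_sub _ (le_of_lt hpq), Finset.sum_range_sub, Finset.sum_range_sub]
      ring
    rw [if_pos hpq, ← htel, Finset.sum_mul, ← hfil, Finset.sum_filter]
  · rw [if_neg hpq]
    refine (Finset.sum_eq_zero fun r _ => ?_).symm
    rw [if_neg]
    rintro ⟨h1, h2⟩
    exact hpq (lt_of_le_of_lt h1 h2)

end Aux

/-- The Teleman inequality holds assuming only `N r ≥ 1` for all `r` and `N r₀ ≥ 2`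
for at least one `r₀`. -/
theorem teleman_inequality_weak {ι : Type*} [Fintype ι]
    (B : (ι → ℤ) →ₗ[ℤ] (ι → ℤ) →ₗ[ℤ] ℤ)
    (ℓ : ℕ) (d : ℕ → ι → ℤ) (k : ℕ → ℤ)
    (hdec : ∀ r, r + 1 < ℓ → k (r + 1) < k r)
    (hN1 : ∀ r, r + 1 < ℓ →
      1 ≤ -(B (∑ m ∈ Finset.range (r + 1), d m) (∑ n ∈ Finset.Ico (r + 1) ℓ, d n)))
    (hN2 : ∃ r, r + 1 < ℓ ∧
      2 ≤ -(B (∑ m ∈ Finset.range (r + 1), d m) (∑ n ∈ Finset.Ico (r + 1) ℓ, d n))) :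
    ∀ m < ℓ, ∀ n < ℓ,
      k m - k n < ∑ p ∈ Finset.range ℓ, ∑ q ∈ Finset.range ℓ,
        if p < q then (k q - k p) * B (d p) (d q) else 0 := by
  obtain ⟨r₀, hr₀, hN2'⟩ := hN2
  intro m hm n hn
  set N : ℕ → ℤ := fun r =>
    -(B (∑ m ∈ Finset.range (r + 1), d m) (∑ n ∈ Finset.Ico (r + 1) ℓ, d n)) with hN
  rw [teleman_key B ℓ d k]
  have hℓ : ℓ = (ℓ - 1) + 1 := by omega
  -- the last term of the sum vanishes
  have hlast : N (ℓ - 1) = 0 := by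
    show -(B (∑ m ∈ Finset.range ((ℓ - 1) + 1), d m)
        (∑ n ∈ Finset.Ico ((ℓ - 1) + 1) ℓ, d n)) = 0
    rw [show (ℓ - 1) + 1 = ℓ by omega, Finset.Ico_self, Finset.sum_empty, map_zero, neg_zero]
  have hsplit : ∑ r ∈ Finset.range ℓ, (k r - k (r+1)) * N r
      = ∑ r ∈ Finset.range (ℓ - 1), (k r - k (r+1)) * N r := by
    rw [hℓ, Finset.sum_range_succ, ← hℓ, hlast, mul_zero, add_zero]
  rw [hsplit]
  -- antitone
  have hanti : ∀ a b : ℕ, a ≤ b → b < ℓ → k b ≤ k a := by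
    intro a b hab hb
    induction b with
    | zero => simp [Nat.le_zero.mp hab]
    | succ c ih =>
      rcases Nat.eq_or_lt_of_le hab with h | h
      · rw [h]
      · exact le_trans (le_of_lt (hdec c hb)) (ih (by omega) (by omega))
  have hkm : k m - k n ≤ k 0 - k (ℓ - 1) := by
    have h1 := hanti 0 m (Nat.zero_le m) hm
    have h2 := hanti n (ℓ - 1) (by omega) (by omega)
    omega
  have htel : ∑ r ∈ Finset.range (ℓ - 1), (k r - k (r+1)) = k 0 - k (ℓ - 1) :=
    Finset.sum_range_sub' k (ℓ - 1)
  have hgap : ∀ r, r + 1 < ℓ → 1 ≤ k r - k (r+1) := fun r h => by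
    have := hdec r h; omega
  have hstep : ∑ r ∈ Finset.range (ℓ - 1), (k r - k (r+1))
      < ∑ r ∈ Finset.range (ℓ - 1), (k r - k (r+1)) * N r := by
    have hdiff : ∑ r ∈ Finset.range (ℓ - 1), (k r - k (r+1)) * N r
        - ∑ r ∈ Finset.range (ℓ - 1), (k r - k (r+1))
        = ∑ r ∈ Finset.range (ℓ - 1), (k r - k (r+1)) * (N r - 1) := by
      rw [← Finset.sum_sub_distrib]
      exact Finset.sum_congr rfl fun r _ => by ring
    have hpos : 0 < ∑ r ∈ Finset.range (ℓ - 1), (k r - k (r+1)) * (N r - 1) := by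
      have hr₀mem : r₀ ∈ Finset.range (ℓ - 1) := by
        rw [Finset.mem_range]; omega
      have hnonneg : ∀ r ∈ Finset.range (ℓ - 1), 0 ≤ (k r - k (r+1)) * (N r - 1) := by
        intro r hr
        rw [Finset.mem_range] at hr
        have h1 := hgap r (by omega)
        have h2 : (1:ℤ) ≤ N r := hN1 r (by omega)
        nlinarith
      have hone : (1:ℤ) ≤ (k r₀ - k (r₀+1)) * (N r₀ - 1) := by
        have h1 := hgap r₀ hr₀
        have h2 : (2:ℤ) ≤ N r₀ := hN2'
        nlinarith
      calc (0:ℤ) < 1 := one_pos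
        _ ≤ (k r₀ - k (r₀+1)) * (N r₀ - 1) := hone
        _ ≤ ∑ r ∈ Finset.range (ℓ - 1), (k r - k (r+1)) * (N r - 1) :=
            Finset.single_le_sum hnonneg hr₀mem
    omega
  calc k m - k n ≤ k 0 - k (ℓ - 1) := hkm
    _ = ∑ r ∈ Finset.range (ℓ - 1), (k r - k (r+1)) := htel.symm
    _ < ∑ r ∈ Finset.range (ℓ - 1), (k r - k (r+1)) * N r := hstep
end

section
/- For the 3-vertex quiver with five arrows 1→2, one arrow 1→3, and one arrow 2→3, with d = (4,1,4), the canonical stability parameter θ_can = ⟨d,−⟩−⟨−,d⟩ equals (9,−16,−5), the vector e = (3,1,2) satisfies e ≤ d, μ(e) = 1/6 > −1/3 = μ(d−e), and ⟨e, d−e⟩ = −1; in particular strong ample stability fails for (Q, d, θ_can). -/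
/-- For the 3-vertex quiver with five arrows 1→2, one arrow 1→3, one arrow 2→3
and `d = (4,1,4)`: `θ_can = (9,−16,−5)`, and `e = (3,1,2)` violates strong ample
stability: `e ≤ d`, `μ(e) = 1/6 > −1/3 = μ(d−e)` but `⟨e, d−e⟩ = −1 > −2`. -/
theorem example_quiver_414_not_strongly_ample :
    let E : (Fin 3 → ℤ) → (Fin 3 → ℤ) → ℤ := fun α β =>
      α 0 * β 0 + α 1 * β 1 + α 2 * β 2 - 5 * α 0 * β 1 - α 0 * β 2 - α 1 * β 2
    let d : Fin 3 → ℤ := ![4, 1, 4]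
    let θ : (Fin 3 → ℤ) → ℤ := fun x => E d x - E x d
    let μ : (Fin 3 → ℤ) → ℚ := fun x => ((θ x : ℤ) : ℚ) / ((x 0 + x 1 + x 2 : ℤ) : ℚ)
    let e : Fin 3 → ℤ := ![3, 1, 2]
    (∀ x : Fin 3 → ℤ, θ x = 9 * x 0 - 16 * x 1 - 5 * x 2) ∧
    (∀ i, e i ≤ d i) ∧
    μ e = 1 / 6 ∧ μ (d - e) = -(1 / 3) ∧ μ e > μ (d - e) ∧
    E e (d - e) = -1 ∧ ¬ (E e (d - e) ≤ -2) := by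
  intro E d θ μ e
  refine ⟨fun x => by simp only [E, θ, d]; simp [Matrix.cons_val_zero, Matrix.cons_val_one]; ring,
    fun i => by fin_cases i <;> simp [e, d], ?_, ?_, ?_, ?_, ?_⟩ <;>
    simp [μ, θ, E, e, d] <;> norm_num
end
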